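/- Consider Pandora's problem with n boxes, each of opening cost 1/n, where each reward distribution D_i is Bernoulli on {0,1} with success probability either (1+ε)/n ('plus' box) or (1−ε)/n ('minus' box); assume (1+ε)/n < 1/2. Any deterministic policy is characterized by an ordered subsequence of boxes that it opens one by one until a reward 1 is observed (then stopping and taking it), and the optimal policy opens exactly the plus boxes. Say a policy h makes k mistakes if the number of plus boxes it omits plus the number of minus boxes it includes equals k. Then the expected objective of h satisfies h(D) ≤ Opt(D) − (εk/n)·(1 − (1+ε)/n)^n, and in particular h(D) ≤ Opt(D) − (εk/n)·e^{−2−2ε}. -/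

import Mathlib

open MeasureTheory ProbabilityTheory
open scoped NNReal ENNReal

/-- Expected value `h(D) = E_{t∼D}[h(t)]` of a hypothesis under the product
distribution with marginals `μ i`. -/
noncomputable def expVal {n : ℕ} (h : (Fin n → ℝ) → ℝ) (μ : Fin n → Measure ℝ) : ℝ :=
  ∫ t, h t ∂(Measure.pi μ)

/-- A distribution on `ℝ` supported on `[0,1]`. -/
def SuppIn01 (μ : Measure ℝ) : Prop := μ (Set.Icc (0 : ℝ) 1)ᶜ = 0

/-- `Opt(D) = sup_{h ∈ H} h(D)`. -/
noncomputable def Opt {n : ℕ} (H : Set ((Fin n → ℝ) → ℝ)) (μ : Fin n → Measure ℝ) : ℝ :=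
  ⨆ h : H, expVal (h : (Fin n → ℝ) → ℝ) μ

/-- Coordinatewise first-order stochastic dominance `P ⪰ Q`:
`F_{P_i}(t) ≤ F_{Q_i}(t)` for every `i` and `t`. -/
def StochDom {n : ℕ} (P Q : Fin n → Measure ℝ) : Prop :=
  ∀ (i : Fin n) (t : ℝ), cdf (P i) t ≤ cdf (Q i) t

/-- Strong monotonicity of a problem `H`: for every product distribution `D̃`
(on `[0,1]ⁿ`) there is an optimal hypothesis `h_{D̃}` whose expected value on any
product distribution `D ⪰ D̃` is at least `Opt(D̃)`. -/
def StronglyMonotone {n : ℕ} (H : Set ((Fin n → ℝ) → ℝ)) : Prop :=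
  ∀ Dt : Fin n → Measure ℝ, (∀ i, IsProbabilityMeasure (Dt i)) → (∀ i, SuppIn01 (Dt i)) →
    ∃ h ∈ H, expVal h Dt = Opt H Dt ∧
      ∀ D : Fin n → Measure ℝ, (∀ i, IsProbabilityMeasure (D i)) → (∀ i, SuppIn01 (D i)) →
        StochDom D Dt → Opt H Dt ≤ expVal h D

/-- The marginal empirical measure: the uniform distribution over the `i`-th
coordinates of the samples `s`. -/
noncomputable def empMeas {N n : ℕ} (s : Fin N → Fin n → ℝ) (i : Fin n) : Measure ℝ :=
  ((N : ℝ≥0)⁻¹ : ℝ≥0) • ∑ m : Fin N, Measure.dirac (s m i)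

/-- Expectation of `h` under the *product empirical distribution* `E = E_1 × ⋯ × E_n`
determined by the samples `s` (written directly as a finite average over all
combinations of sample coordinates). -/
noncomputable def empExp {N n : ℕ} (s : Fin N → Fin n → ℝ) (h : (Fin n → ℝ) → ℝ) : ℝ :=
  (∑ m : Fin n → Fin N, h fun i => s (m i) i) / (N ^ n : ℕ)

/-- `Opt(E)` for the product empirical distribution of the samples `s`. -/
noncomputable def empOpt {N n : ℕ} (H : Set ((Fin n → ℝ) → ℝ)) (s : Fin N → Fin n → ℝ) : ℝ :=
  ⨆ h : H, empExp s (h : (Fin n → ℝ) → ℝ)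

/-- The empirical CDF `F_{E_i}(t) = #{m : s_i^{(m)} ≤ t} / N`. -/
noncomputable def empCdf {N n : ℕ} (s : Fin N → Fin n → ℝ) (i : Fin n) (t : ℝ) : ℝ :=
  ((Finset.univ.filter fun m : Fin N => s m i ≤ t).card : ℝ) / N

/-- Total variation distance between two measures. -/
noncomputable def tvDist {α : Type*} [MeasurableSpace α] (P Q : Measure α) : ℝ :=
  ⨆ A : {A : Set α // MeasurableSet A}, ((P A).toReal - (Q A).toReal)

/-- Squared Hellinger distance `H²(P,Q) = 1 − ∫ √(dP/dλ · dQ/dλ) dλ` (`λ = P + Q`). -/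
noncomputable def sqHellinger {α : Type*} [MeasurableSpace α] (P Q : Measure α) : ℝ :=
  1 - ∫ x, Real.sqrt ((P.rnDeriv (P + Q) x).toReal * (Q.rnDeriv (P + Q) x).toReal) ∂(P + Q)

/-- The measure of i.i.d. samples: `N` independent draws from the product
distribution with marginals `μ`. -/
noncomputable def samples (N : ℕ) {n : ℕ} (μ : Fin n → Measure ℝ) :
    Measure (Fin N → Fin n → ℝ) :=
  Measure.pi fun _ : Fin N => Measure.pi μ

/-- Weitzman's reservation value of a box with reward distribution `μ` and
opening cost `c`: `σ = inf {σ : E[max(t − σ, 0)] ≤ c}`. -/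
noncomputable def reservation (μ : Measure ℝ) (c : ℝ) : ℝ :=
  sInf {σ : ℝ | ∫ t, max (t - σ) 0 ∂μ ≤ c}

/-- Execution of Weitzman-style index policy: boxes are inspected in the order
`o 0, o 1, …`; with current best observed reward `best` and total cost `paid`,
the policy stops (taking `best − paid`) as soon as `best` is at least the
reservation value of the next box, and otherwise opens it. -/
noncomputable def weitzAux {n : ℕ} (o : Equiv.Perm (Fin n)) (σ c t : Fin n → ℝ) :
    ℕ → ℝ → ℝ → ℝ
  | k, best, paid =>
    if h : k < n then
      if σ (o ⟨k, h⟩) ≤ best then best - paid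
      else weitzAux o σ c t (k + 1) (max best (t (o ⟨k, h⟩))) (paid + c (o ⟨k, h⟩))
    else best - paid
  termination_by k => n - k
  decreasing_by omega

/-- The realized objective (reward taken minus total cost paid) of Weitzman's
index policy with inspection order `o`, reservation values `σ` and costs `c`,
on the reward realization `t`. -/
noncomputable def weitzmanReward {n : ℕ} (o : Equiv.Perm (Fin n)) (σ c t : Fin n → ℝ) : ℝ :=
  weitzAux o σ c t 0 0 0

/-- Best observed reward in a history (`0` if nothing was opened). -/
noncomputable def histBest {n : ℕ} (hist : Fin n → Option ℝ) : ℝ :=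
  ⨆ i : Fin n, (hist i).getD 0

/-- Total cost paid in a history. -/
noncomputable def histPaid {n : ℕ} (c : Fin n → ℝ) (hist : Fin n → Option ℝ) : ℝ :=
  ∑ i : Fin n, if (hist i).isSome then c i else 0

/-- Execution of a general adaptive policy `π`: given the history of observed
rewards, `π` either proposes to open a further (unopened) box or stops; the
realized objective is the best observed reward minus the total cost paid. -/
noncomputable def runPolicyAux {n : ℕ} (π : (Fin n → Option ℝ) → Option (Fin n))
    (c t : Fin n → ℝ) : ℕ → (Fin n → Option ℝ) → ℝ
  | 0, hist => histBest hist - histPaid c hist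
  | fuel + 1, hist =>
    match π hist with
    | none => histBest hist - histPaid c hist
    | some i =>
      if (hist i).isSome then histBest hist - histPaid c hist
      else runPolicyAux π c t fuel (Function.update hist i (some (t i)))

/-- The realized objective of the adaptive policy `π` on realization `t`. -/
noncomputable def runPolicy {n : ℕ} (π : (Fin n → Option ℝ) → Option (Fin n))
    (c t : Fin n → ℝ) : ℝ :=
  runPolicyAux π c t n fun _ => none

/-- The optimal expected objective of Pandora's problem with reward
distributions `μ` and costs `c`, over all adaptive policies. -/
noncomputable def pandoraOpt {n : ℕ} (μ : Fin n → Measure ℝ) (c : Fin n → ℝ) : ℝ :=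
  ⨆ π : (Fin n → Option ℝ) → Option (Fin n), ∫ t, runPolicy π c t ∂(Measure.pi μ)

/-- The Bernoulli distribution on `{0,1} ⊆ ℝ` with success probability `p`. -/
noncomputable def bernR (p : ℝ) : Measure ℝ :=
  p.toNNReal • Measure.dirac (1 : ℝ) + (1 - p).toNNReal • Measure.dirac (0 : ℝ)

/-- The hard Pandora instance: box `i` has reward distribution Bernoulli with
success probability `(1+ε)/n` if `v i` (a 'plus' box) and `(1−ε)/n` otherwise. -/
noncomputable def hardBox (n : ℕ) (ε : ℝ) (v : Fin n → Bool) (i : Fin n) : Measure ℝ :=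
  bernR ((1 + if v i then ε else -ε) / n)

/-- The realized objective of the subsequence policy that opens the boxes in the
list `L` in order, each at cost `c`, until a reward `1` is observed (which it
then takes); if no reward `1` is found it takes `0`. -/
noncomputable def seqReward {n : ℕ} (c : ℝ) (t : Fin n → ℝ) : List (Fin n) → ℝ
  | [] => 0
  | i :: L => if t i = 1 then 1 - c else seqReward c t L - c


/-!
Expectations under the product of Bernoulli boxes are finite sums over `Bool`-vectors, in which
the first box of a subsequence policy is independent of the later ones; so the value of the
policy opening the list `L` obeys `V(i :: L) = (p i - c) + (1 - p i) V(L)`. Writing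
`p i = c ± r` with `r = ε/n`, a plus box contributes `r` and a minus box `-r`, each weighted by
the probability that all earlier boxes failed, which is at least `(1 - (1+ε)/n)^n`. Compared
with the policy opening exactly the plus boxes, whose value is at most Pandora's optimum, every
omitted plus box and every included minus box thus costs at least `r (1 - (1+ε)/n)^n`. Finally
`e^{-2x} ≤ 1 - x` for `0 ≤ x ≤ 1/2`.
-/

open Finset Function

section BernoulliProduct

variable {ι : Type*} [Fintype ι]

noncomputable def bernWeight (p : ι → ℝ) (s : ι → Bool) : ℝ :=
  ∏ i, if s i then p i else 1 - p i

variable {p : ι → ℝ}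

lemma bernWeight_nonneg (h0 : ∀ i, 0 ≤ p i) (h1 : ∀ i, p i ≤ 1) (s : ι → Bool) :
    0 ≤ bernWeight p s :=
  prod_nonneg fun i _ => by split <;> linarith [h0 i, h1 i]

variable [DecidableEq ι]

noncomputable def bernExpect (p : ι → ℝ) (F : (ι → Bool) → ℝ) : ℝ :=
  ∑ s, bernWeight p s * F s

lemma sum_bernWeight : ∑ s, bernWeight p s = 1 := by
  unfold bernWeight
  rw [← Fintype.prod_sum fun i (b : Bool) => if b then p i else 1 - p i]
  simp

lemma bernExpect_const (a : ℝ) : bernExpect p (fun _ => a) = a := by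
  rw [bernExpect, ← sum_mul, sum_bernWeight, one_mul]

lemma bernExpect_add (F G : (ι → Bool) → ℝ) :
    bernExpect p (fun s => F s + G s) = bernExpect p F + bernExpect p G := by
  simp only [bernExpect, mul_add, sum_add_distrib]

lemma bernExpect_mono (h0 : ∀ i, 0 ≤ p i) (h1 : ∀ i, p i ≤ 1) {F G : (ι → Bool) → ℝ}
    (hFG : ∀ s, F s ≤ G s) : bernExpect p F ≤ bernExpect p G :=
  sum_le_sum fun s _ => mul_le_mul_of_nonneg_left (hFG s) (bernWeight_nonneg h0 h1 s)

lemma pi_bernR_eq_sum_dirac (h0 : ∀ i, 0 ≤ p i) (h1 : ∀ i, p i ≤ 1) :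
    Measure.pi (fun i => bernR (p i))
      = ∑ s : ι → Bool, ENNReal.ofReal (bernWeight p s) •
          Measure.dirac (fun i => ((s i).toNat : ℝ)) := by
  classical
  have : ∀ i, IsFiniteMeasure (bernR (p i)) := fun i => by unfold bernR; infer_instance
  refine Measure.pi_eq fun A hA => ?_
  have hterm : ∀ s : ι → Bool,
      (ENNReal.ofReal (bernWeight p s) • Measure.dirac (fun i => ((s i).toNat : ℝ)))
          (Set.univ.pi A)
        = ∏ i, ENNReal.ofReal (if s i then p i else 1 - p i) *
            (if ((s i).toNat : ℝ) ∈ A i then 1 else 0) := by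
    intro s
    rw [Measure.smul_apply, Measure.dirac_apply' _ (MeasurableSet.univ_pi hA), smul_eq_mul,
      bernWeight, ENNReal.ofReal_prod_of_nonneg fun i _ => by split <;> linarith [h0 i, h1 i],
      prod_mul_distrib]
    congr 1
    simp only [Set.indicator_apply, Set.mem_univ_pi, Pi.one_apply]
    split_ifs with h
    · exact (prod_eq_one fun i _ => if_pos (h i)).symm
    · push Not at h
      obtain ⟨i, hi⟩ := h
      exact (prod_eq_zero (mem_univ i) (if_neg hi)).symm
  rw [Measure.finsetSum_apply, sum_congr rfl fun s _ => hterm s, ← Fintype.prod_sum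
    fun i (b : Bool) => ENNReal.ofReal (if b then p i else 1 - p i) *
      if (b.toNat : ℝ) ∈ A i then 1 else 0]
  refine prod_congr rfl fun i _ => ?_
  rw [bernR, Measure.add_apply, Measure.smul_apply, Measure.smul_apply,
    Measure.dirac_apply' _ (hA i), Measure.dirac_apply' _ (hA i), Fintype.sum_bool]
  simp [Set.indicator_apply, ENNReal.smul_def, ENNReal.ofReal]

lemma integral_pi_bernR (h0 : ∀ i, 0 ≤ p i) (h1 : ∀ i, p i ≤ 1) (f : (ι → ℝ) → ℝ) :
    ∫ t, f t ∂(Measure.pi fun i => bernR (p i))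
      = bernExpect p fun s => f fun i => ((s i).toNat : ℝ) := by
  rw [pi_bernR_eq_sum_dirac h0 h1, integral_finsetSum_measure fun s _ =>
    (integrable_dirac enorm_lt_top).smul_measure ENNReal.ofReal_ne_top]
  refine sum_congr rfl fun s _ => ?_
  rw [integral_smul_measure, integral_dirac, ENNReal.toReal_ofReal (bernWeight_nonneg h0 h1 s),
    smul_eq_mul]

lemma sum_sum_update (H : (ι → Bool) → ℝ) (i : ι) :
    ∑ s, ∑ b, H (update s i b) = 2 * ∑ s, H s := by
  have hflip : Involutive fun s : ι → Bool => update s i (!s i) := fun s => by simp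
  calc ∑ s, ∑ b, H (update s i b) = ∑ s, (H s + H (update s i (!s i))) := by
        refine sum_congr rfl fun s _ => ?_
        have hs : update s i (s i) = s := update_eq_self i s
        rw [Fintype.sum_bool]
        cases h : s i <;> rw [h] at hs <;> simp [hs, add_comm]
    _ = 2 * ∑ s, H s := by
        rw [sum_add_distrib, two_mul]
        exact congrArg _ (Equiv.sum_comp (hflip.toPerm _) H)

lemma bernWeight_update (s : ι → Bool) (i : ι) (b : Bool) :
    bernWeight p (update s i b)
      = (if b then p i else 1 - p i) * ∏ j ∈ univ \ {i}, if s j then p j else 1 - p j := by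
  simp only [bernWeight, apply_update (fun j (b : Bool) => if b then p j else 1 - p j),
    prod_update_of_mem (mem_univ i)]

lemma bernExpect_mul_of_update_eq {F : (ι → Bool) → ℝ} {i : ι}
    (hF : ∀ s b, F (update s i b) = F s) (g : Bool → ℝ) :
    bernExpect p (fun s => g (s i) * F s)
      = (p i * g true + (1 - p i) * g false) * bernExpect p F := by
  set R := ∑ s, (∏ j ∈ univ \ {i}, if s j then p j else 1 - p j) * F s
  have key : ∀ G : Bool → ℝ,
      2 * bernExpect p (fun s => G (s i) * F s) = (p i * G true + (1 - p i) * G false) * R := by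
    intro G
    rw [bernExpect, ← sum_sum_update, mul_sum]
    refine sum_congr rfl fun s _ => ?_
    simp only [Fintype.sum_bool, bernWeight_update, if_true, Bool.false_eq_true,
      if_false]
    rw [update_self, update_self, hF, hF]
    ring
  have hR := key fun _ => 1
  simp only [one_mul, mul_one, add_sub_cancel] at hR
  linear_combination (key g - (p i * g true + (1 - p i) * g false) * hR) / 2

end BernoulliProduct

/-- The expected objective of the subsequence policy `L` when box `i` pays `1` with
probability `p i` and every box costs `c`. -/
noncomputable def seqValue {α : Type*} (p : α → ℝ) (c : ℝ) : List α → ℝ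
  | [] => 0
  | i :: L => (p i - c) + (1 - p i) * seqValue p c L

section SubsequencePolicy

variable {n : ℕ}

lemma seqReward_congr (c : ℝ) {t t' : Fin n → ℝ} :
    ∀ L : List (Fin n), (∀ j ∈ L, t j = t' j) → seqReward c t L = seqReward c t' L
  | [], _ => rfl
  | i :: L, h => by
    simp only [seqReward, h i List.mem_cons_self,
      seqReward_congr c L fun j hj => h j (List.mem_cons_of_mem _ hj)]

lemma bernExpect_seqReward (p : Fin n → ℝ) (c : ℝ) :
    ∀ L : List (Fin n), L.Nodup →
      bernExpect p (fun s => seqReward c (fun j => ((s j).toNat : ℝ)) L) = seqValue p c L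
  | [], _ => by simp [seqReward, seqValue, bernExpect]
  | i :: L, hL => by
    rw [List.nodup_cons] at hL
    have hsplit : ∀ s : Fin n → Bool, seqReward c (fun j => ((s j).toNat : ℝ)) (i :: L)
        = (if s i then 1 - c else -c) * 1
          + (if s i then 0 else 1) * seqReward c (fun j => ((s j).toNat : ℝ)) L := by
      intro s
      cases h : s i <;> simp [seqReward, h, sub_eq_neg_add]
    have hindep : ∀ (s : Fin n → Bool) b,
        seqReward c (fun j => ((update s i b j).toNat : ℝ)) L
          = seqReward c (fun j => ((s j).toNat : ℝ)) L := fun s b =>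
      seqReward_congr c L fun j hj => by rw [update_of_ne (ne_of_mem_of_not_mem hj hL.1)]
    simp only [hsplit]
    rw [bernExpect_add, bernExpect_mul_of_update_eq (F := fun _ => 1) (fun _ _ => rfl)
        (fun b => if b then 1 - c else -c),
      bernExpect_mul_of_update_eq hindep fun b => if b then 0 else 1, bernExpect_const,
      bernExpect_seqReward p c L hL.2, seqValue]
    simp only [if_true, Bool.false_eq_true, if_false]
    ring

end SubsequencePolicy

section PolicySimulation

variable {n : ℕ}

open Classical in
noncomputable def seqPolicy (L : List (Fin n)) : (Fin n → Option ℝ) → Option (Fin n) :=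
  fun hist => if ∃ j, hist j = some 1 then none else L.find? fun j => (hist j).isNone

def openedHist (t : Fin n → ℝ) (Pre : List (Fin n)) : Fin n → Option ℝ :=
  fun j => if j ∈ Pre then some (t j) else none

lemma runPolicyAux_of_eq_none {π : (Fin n → Option ℝ) → Option (Fin n)} {c t : Fin n → ℝ}
    {hist : Fin n → Option ℝ} (h : π hist = none) (fuel : ℕ) :
    runPolicyAux π c t fuel hist = histBest hist - histPaid c hist := by
  cases fuel <;> simp [runPolicyAux, h]

lemma histPaid_openedHist (c : ℝ) (t : Fin n → ℝ) {Pre : List (Fin n)} (hPre : Pre.Nodup) :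
    histPaid (fun _ => c) (openedHist t Pre) = Pre.length * c := by
  have h : ∀ j, (if (openedHist t Pre j).isSome then c else 0)
      = if j ∈ Pre.toFinset then c else 0 := fun j => by
    by_cases hj : j ∈ Pre <;> simp [openedHist, hj]
  rw [histPaid, sum_congr rfl fun j _ => h j, sum_ite_mem, univ_inter, sum_const,
    List.toFinset_card_of_nodup hPre, nsmul_eq_mul]

lemma histBest_openedHist {t : Fin n → ℝ} (ht : ∀ j, t j = 0 ∨ t j = 1)
    (Pre : List (Fin n)) :
    histBest (openedHist t Pre) = if ∃ j ∈ Pre, t j = 1 then 1 else 0 := by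
  have hle : ∀ j, (openedHist t Pre j).getD 0 ≤ if ∃ j ∈ Pre, t j = 1 then 1 else 0 := by
    intro j
    by_cases hj : j ∈ Pre
    · rcases ht j with h | h
      · simp only [openedHist, hj, h, if_true, Option.getD_some]
        split_ifs <;> norm_num
      · have hex : ∃ j ∈ Pre, t j = 1 := ⟨j, hj, h⟩
        simp [openedHist, hj, h, hex]
    · simp only [openedHist, hj, if_false, Option.getD_none]
      split_ifs <;> norm_num
  have hnonneg : ∀ j, 0 ≤ (openedHist t Pre j).getD 0 := fun j => by
    by_cases hj : j ∈ Pre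
    · rcases ht j with h | h <;> simp [openedHist, hj, h]
    · simp [openedHist, hj]
  refine le_antisymm (Real.iSup_le hle (by split_ifs <;> norm_num)) ?_
  split_ifs with hex
  · obtain ⟨j, hj, h1⟩ := hex
    calc (1 : ℝ) = (openedHist t Pre j).getD 0 := by simp [openedHist, hj, h1]
      _ ≤ histBest (openedHist t Pre) :=
        le_ciSup (f := fun j => (openedHist t Pre j).getD 0) (Set.finite_range _).bddAbove j
  · exact Real.iSup_nonneg hnonneg

lemma update_openedHist (t : Fin n → ℝ) (Pre : List (Fin n)) (i : Fin n) :
    update (openedHist t Pre) i (some (t i)) = openedHist t (Pre ++ [i]) := by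
  funext j
  by_cases hji : j = i
  · subst hji; simp [openedHist]
  · simp [openedHist, hji]

lemma seqPolicy_openedHist_of_exists {L Pre : List (Fin n)} {t : Fin n → ℝ}
    (h : ∃ j ∈ Pre, t j = 1) : seqPolicy L (openedHist t Pre) = none := by
  obtain ⟨j, hj, h1⟩ := h
  rw [seqPolicy, if_pos ⟨j, by simp [openedHist, hj, h1]⟩]

lemma seqPolicy_openedHist {Pre M : List (Fin n)} {t : Fin n → ℝ} (hnd : (Pre ++ M).Nodup)
    (h0 : ∀ j ∈ Pre, t j = 0) : seqPolicy (Pre ++ M) (openedHist t Pre) = M.head? := by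
  have hno : ¬∃ j, openedHist t Pre j = some 1 := by
    rintro ⟨j, hj⟩
    by_cases hjP : j ∈ Pre <;> simp_all [openedHist]
  rw [seqPolicy, if_neg hno, List.find?_append,
    List.find?_eq_none.2 fun j hj => by simp [openedHist, hj], Option.none_or]
  cases M with
  | nil => rfl
  | cons i M =>
    have hi : i ∉ Pre := fun hi => (List.nodup_append.1 hnd).2.2 i hi i List.mem_cons_self rfl
    exact List.find?_cons_of_pos (by simp [openedHist, hi])

lemma runPolicyAux_seqPolicy {L : List (Fin n)} (hL : L.Nodup) (c : ℝ) {t : Fin n → ℝ}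
    (ht : ∀ j, t j = 0 ∨ t j = 1) :
    ∀ (M Pre : List (Fin n)) (fuel : ℕ), L = Pre ++ M → (∀ j ∈ Pre, t j = 0) →
      M.length ≤ fuel →
      runPolicyAux (seqPolicy L) (fun _ => c) t fuel (openedHist t Pre)
        = seqReward c t M - Pre.length * c
  | [], Pre, fuel, hLM, h0, _ => by
    subst hLM
    have hno : ¬∃ j ∈ Pre, t j = 1 := fun ⟨j, hj, h1⟩ => by simp [h0 j hj] at h1
    rw [runPolicyAux_of_eq_none (seqPolicy_openedHist hL h0), histBest_openedHist ht,
      if_neg hno, histPaid_openedHist c t (by simpa using hL), seqReward]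
  | i :: M, Pre, fuel + 1, hLM, h0, hlen => by
    subst hLM
    have hi : i ∉ Pre := fun hi => (List.nodup_append.1 hL).2.2 i hi i List.mem_cons_self rfl
    have hL' : (Pre ++ [i]).Nodup := List.Nodup.of_append_left (l₂ := M) (by simpa using hL)
    simp only [runPolicyAux, seqPolicy_openedHist hL h0, List.head?_cons]
    rw [if_neg (by simp [openedHist, hi]), update_openedHist]
    rcases ht i with h | h
    · rw [runPolicyAux_seqPolicy hL c ht M (Pre ++ [i]) fuel (by simp)
        (fun j hj => by rcases List.mem_append.1 hj with hj | hj <;> simp_all)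
        (by simpa using hlen), seqReward, if_neg (by simp [h]), List.length_append,
        List.length_singleton]
      push_cast
      ring
    · rw [runPolicyAux_of_eq_none (seqPolicy_openedHist_of_exists ⟨i, by simp, h⟩),
        histBest_openedHist ht, if_pos ⟨i, by simp, h⟩, histPaid_openedHist c t hL', seqReward,
        if_pos h, List.length_append, List.length_singleton]
      push_cast
      ring

lemma runPolicy_seqPolicy {L : List (Fin n)} (hL : L.Nodup) (c : ℝ) {t : Fin n → ℝ}
    (ht : ∀ j, t j = 0 ∨ t j = 1) :
    runPolicy (seqPolicy L) (fun _ => c) t = seqReward c t L := by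
  have hempty : (fun _ => none) = openedHist t [] := by funext j; simp [openedHist]
  rw [runPolicy, hempty, runPolicyAux_seqPolicy hL c ht L [] n rfl (by simp)
    (by simpa using hL.length_le_card)]
  simp

lemma runPolicyAux_le_one (π : (Fin n → Option ℝ) → Option (Fin n)) {c : Fin n → ℝ}
    (hc : ∀ j, 0 ≤ c j) {t : Fin n → ℝ} (ht : ∀ j, t j ≤ 1) :
    ∀ (fuel : ℕ) (hist : Fin n → Option ℝ), (∀ j, (hist j).getD 0 ≤ 1) →
      runPolicyAux π c t fuel hist ≤ 1 := by
  have hstop : ∀ hist : Fin n → Option ℝ, (∀ j, (hist j).getD 0 ≤ 1) →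
      histBest hist - histPaid c hist ≤ 1 := fun hist h => by
    have hpaid : 0 ≤ histPaid c hist := sum_nonneg fun j _ => by split_ifs <;> simp [hc j]
    have hbest : histBest hist ≤ 1 := Real.iSup_le h zero_le_one
    linarith
  intro fuel
  induction fuel with
  | zero => exact hstop
  | succ fuel ih =>
    intro hist h
    rw [runPolicyAux]
    rcases π hist with _ | i
    · exact hstop hist h
    · dsimp only
      split_ifs
      · exact hstop hist h
      · refine ih _ fun j => ?_
        by_cases hji : j = i
        · subst hji; simpa using ht j
        · simpa [hji] using h j

end PolicySimulation

lemma seqValue_le_pandoraOpt {n : ℕ} {p : Fin n → ℝ} (h0 : ∀ i, 0 ≤ p i)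
    (h1 : ∀ i, p i ≤ 1) {c : ℝ} (hc : 0 ≤ c) {L : List (Fin n)} (hL : L.Nodup) :
    seqValue p c L ≤ pandoraOpt (fun i => bernR (p i)) (fun _ => c) := by
  have hbool : ∀ (s : Fin n → Bool) j, ((s j).toNat : ℝ) = 0 ∨ ((s j).toNat : ℝ) = 1 :=
    fun s j => by cases s j <;> simp
  have hbdd : BddAbove (Set.range fun π : (Fin n → Option ℝ) → Option (Fin n) =>
      ∫ t, runPolicy π (fun _ => c) t ∂(Measure.pi fun i => bernR (p i))) := by
    refine ⟨1, Set.forall_mem_range.2 fun π => ?_⟩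
    rw [integral_pi_bernR h0 h1, ← bernExpect_const (p := p) 1]
    exact bernExpect_mono h0 h1 fun s => runPolicyAux_le_one π (fun _ => hc)
      (fun j => by rcases hbool s j with h | h <;> simp [h]) n _ fun _ => by simp
  calc seqValue p c L
      = ∫ t, runPolicy (seqPolicy L) (fun _ => c) t ∂(Measure.pi fun i => bernR (p i)) := by
        rw [integral_pi_bernR h0 h1, ← bernExpect_seqReward p c L hL]
        simp only [runPolicy_seqPolicy hL c (hbool _)]
    _ ≤ pandoraOpt (fun i => bernR (p i)) (fun _ => c) := le_ciSup hbdd (seqPolicy L)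

section MistakeBound

variable {α : Type*} {p : α → ℝ} {c r : ℝ} {L : List α}

lemma seqValue_of_forall_eq (hp : ∀ i ∈ L, p i = c + r) :
    seqValue p c L = r * ∑ j ∈ range L.length, (1 - c - r) ^ j := by
  induction L with
  | nil => simp [seqValue]
  | cons i L ih =>
    rw [seqValue, ih fun j hj => hp j (List.mem_cons_of_mem _ hj), hp i List.mem_cons_self,
      List.length_cons, geom_sum_succ]
    ring

variable {v : α → Bool}

lemma seqValue_le (hr : 0 ≤ r) (hrc : r ≤ c) (hcr : c + r ≤ 1)
    (hp : ∀ i, p i = c + if v i then r else -r) (L : List α) :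
    seqValue p c L ≤ r * ∑ j ∈ range (L.countP v), (1 - c - r) ^ j
      - (L.countP fun i => !v i) * r * (1 - c - r) ^ L.length := by
  have hq0 : 0 ≤ 1 - c - r := by linarith
  induction L with
  | nil => simp [seqValue]
  | cons i L ih =>
    have hG : 0 ≤ r * ∑ j ∈ range (L.countP v), (1 - c - r) ^ j :=
      mul_nonneg hr (sum_nonneg fun j _ => pow_nonneg hq0 j)
    have hm : 0 ≤ (L.countP fun i => !v i) * r * (1 - c - r) ^ L.length := by positivity
    rw [seqValue, hp i]
    cases hv : v i
    · have hpow : (1 - c - r) ^ L.length * (1 - c - r) ≤ 1 := by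
        rw [← pow_succ]; exact pow_le_one₀ hq0 (by linarith)
      simp only [List.countP_cons, hv, if_false, Bool.not_false, if_true, Bool.false_eq_true,
        add_zero, List.length_cons, pow_succ]
      push_cast
      linarith [mul_le_mul_of_nonneg_left ih (by linarith : 0 ≤ 1 - (c + -r)),
        mul_nonneg (sub_nonneg.2 hrc) hG, mul_nonneg hr hm, mul_nonneg hr (sub_nonneg.2 hpow)]
    · simp only [List.countP_cons, hv, if_true, Bool.not_true, Bool.false_eq_true, if_false,
        add_zero, List.length_cons, geom_sum_succ, pow_succ]
      linarith [mul_le_mul_of_nonneg_left ih hq0]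

lemma geom_sum_add_mul_pow_le {q : ℝ} (hq0 : 0 ≤ q) (hq1 : q ≤ 1) {a d N : ℕ}
    (h : a + d ≤ N) :
    ∑ j ∈ range a, q ^ j + d * q ^ N ≤ ∑ j ∈ range (a + d), q ^ j := by
  rw [sum_range_add]
  gcongr
  calc (d : ℝ) * q ^ N = ∑ _j ∈ range d, q ^ N := by simp
    _ ≤ ∑ j ∈ range d, q ^ (a + j) :=
      sum_le_sum fun j hj => pow_le_pow_of_le_one hq0 hq1 (by simp at hj; omega)

variable [Fintype α] [DecidableEq α]

lemma List.Nodup.countP_eq_card {L : List α} (hL : L.Nodup) (f : α → Bool) :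
    L.countP f = #{i | f i = true ∧ i ∈ L} := by
  rw [List.countP_eq_length_filter, ← List.toFinset_card_of_nodup (hL.filter _),
    List.toFinset_filter]
  congr 1
  ext i
  simp [and_comm]

lemma seqValue_add_mistakes_le (hr : 0 ≤ r) (hrc : r ≤ c) (hcr : c + r ≤ 1)
    (hp : ∀ i, p i = c + if v i then r else -r) {L : List α} (hL : L.Nodup) :
    seqValue p c L + (#{i | v i = true ∧ i ∉ L} + #{i | v i = false ∧ i ∈ L} : ℕ) * r
        * (1 - c - r) ^ Fintype.card α
      ≤ r * ∑ j ∈ range #{i | v i = true}, (1 - c - r) ^ j := by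
  set q := 1 - c - r
  have hq0 : 0 ≤ q := by linarith
  have hq1 : q ≤ 1 := by linarith
  have hplus : L.countP v + #{i | v i = true ∧ i ∉ L} = #{i | v i = true} := by
    have := card_filter_add_card_filter_not (s := univ.filter fun i => v i = true)
      (fun i => i ∈ L)
    simp only [filter_filter] at this
    rw [hL.countP_eq_card, this]
  have hminus : L.countP (fun i => !v i) = #{i | v i = false ∧ i ∈ L} := by
    simp [hL.countP_eq_card]
  have hgap := geom_sum_add_mul_pow_le hq0 hq1
    (hplus.le.trans (card_le_univ _) : _ ≤ Fintype.card α)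
  rw [hplus] at hgap
  have hpow : q ^ Fintype.card α ≤ q ^ L.length :=
    pow_le_pow_of_le_one hq0 hq1 (by simpa using hL.length_le_card)
  have hval := seqValue_le hr hrc hcr hp L
  rw [hminus] at hval
  push_cast
  linarith [mul_le_mul_of_nonneg_left hgap hr, mul_le_mul_of_nonneg_left hpow
    (by positivity : (0 : ℝ) ≤ #{i | v i = false ∧ i ∈ L} * r)]

end MistakeBound

lemma integral_seqReward_le_pandoraOpt_sub {n : ℕ} {p : Fin n → ℝ} {c r : ℝ}
    {v : Fin n → Bool}
    (hr : 0 ≤ r) (hrc : r ≤ c) (hcr : c + r ≤ 1) (hp : ∀ i, p i = c + if v i then r else -r)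
    {L : List (Fin n)} (hL : L.Nodup) :
    ∫ t, seqReward c t L ∂(Measure.pi fun i => bernR (p i))
      ≤ pandoraOpt (fun i => bernR (p i)) (fun _ => c)
        - (#{i | v i = true ∧ i ∉ L} + #{i | v i = false ∧ i ∈ L} : ℕ) * r
          * (1 - c - r) ^ n := by
  have h0 : ∀ i, 0 ≤ p i := fun i => by rw [hp i]; split_ifs <;> linarith
  have h1 : ∀ i, p i ≤ 1 := fun i => by rw [hp i]; split_ifs <;> linarith
  have hopt := seqValue_le_pandoraOpt h0 h1 (by linarith)
    (nodup_toList (univ.filter fun i => v i = true))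
  rw [seqValue_of_forall_eq (r := r) fun i hi => by simp_all, length_toList] at hopt
  have hmist := seqValue_add_mistakes_le hr hrc hcr hp hL
  rw [Fintype.card_fin] at hmist
  rw [integral_pi_bernR h0 h1, bernExpect_seqReward p c L hL]
  linarith

lemma exp_neg_two_mul_le_one_sub {x : ℝ} (hx0 : 0 ≤ x) (hx : x ≤ 1 / 2) :
    Real.exp (-2 * x) ≤ 1 - x := by
  have h : 1 ≤ Real.exp (2 * x) * (1 - x) := by
    nlinarith [Real.add_one_le_exp (2 * x)]
  rw [neg_mul, Real.exp_neg]
  exact inv_le_of_inv_le₀ (by linarith) (by rwa [inv_le_iff_one_le_mul₀ (by linarith)])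

lemma exp_neg_two_mul_le_one_sub_div_pow {a : ℝ} {N : ℕ} (hN : 0 < N) (ha : 0 ≤ a)
    (h : a / N ≤ 1 / 2) : Real.exp (-2 * a) ≤ (1 - a / N) ^ N := by
  calc Real.exp (-2 * a) = Real.exp (-2 * (a / N)) ^ N := by
        rw [← Real.exp_nat_mul]; field_simp
    _ ≤ (1 - a / N) ^ N :=
        pow_le_pow_left₀ (Real.exp_pos _).le (exp_neg_two_mul_le_one_sub (by positivity) h) N

theorem stmt18 (n : ℕ) (hn : 1 ≤ n) (ε : ℝ) (hε : ε ∈ Set.Ioo (0 : ℝ) 1)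
    (hsmall : (1 + ε) / (n : ℝ) < 1 / 2)
    (v : Fin n → Bool) (L : List (Fin n)) (hL : L.Nodup)
    (k : ℕ)
    (hk : k = (Finset.univ.filter fun i : Fin n => v i = true ∧ i ∉ L).card
            + (Finset.univ.filter fun i : Fin n => v i = false ∧ i ∈ L).card) :
    (∫ t, seqReward (1 / (n : ℝ)) t L ∂(Measure.pi (hardBox n ε v)))
        ≤ pandoraOpt (hardBox n ε v) (fun _ => 1 / (n : ℝ))
          - ε * k / n * (1 - (1 + ε) / n) ^ n
    ∧ (∫ t, seqReward (1 / (n : ℝ)) t L ∂(Measure.pi (hardBox n ε v)))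
        ≤ pandoraOpt (hardBox n ε v) (fun _ => 1 / (n : ℝ))
          - ε * k / n * Real.exp (-2 - 2 * ε) := by
  obtain ⟨hε0, hε1⟩ := hε
  have hn0 : (0 : ℝ) < n := by exact_mod_cast hn
  have hbound := integral_seqReward_le_pandoraOpt_sub
    (p := fun i => (1 + if v i then ε else -ε) / n) (c := 1 / n) (r := ε / n) (v := v)
    (by positivity) (div_le_div_of_nonneg_right hε1.le hn0.le) (by rw [← add_div]; linarith)
    (fun i => by split_ifs <;> ring) hL
  rw [← hk, show 1 - 1 / (n : ℝ) - ε / n = 1 - (1 + ε) / n by ring,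
    show (k : ℝ) * (ε / n) = ε * k / n by ring] at hbound
  have hexp : Real.exp (-2 - 2 * ε) ≤ (1 - (1 + ε) / n) ^ n := by
    rw [show -2 - 2 * ε = -2 * (1 + ε) by ring]
    exact exp_neg_two_mul_le_one_sub_div_pow hn (by linarith) hsmall.le
  exact ⟨hbound, hbound.trans (sub_le_sub_left
    (mul_le_mul_of_nonneg_left hexp (by positivity)) _)⟩
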